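/- Fix integers n ≥ 1 and m ≥ 1, and let L_m and Q_m be as follows: L_m = ∏_{s=1}^{m} ((1/(n+2(m−s)))·r·(d/dr) + 1) and Q_m f = f'' + ((n−1+2m)/r)·f'. Suppose f : (0,∞) → ℝ is smooth and satisfies (d^i/dr^i (L_m f))(1) = 0 for every integer i ≥ 0, and (Q_m^l f)(1) = 0 for all l = 0, 1, …, m−1. Then all derivatives of f vanish at r = 1: f^{(j)}(1) = 0 for every j ≥ 0. -/

import Mathlib

/-- The first-order operator `E_c f = c·r·f' + f`. -/
noncomputable def Eop (c : ℝ) (f : ℝ → ℝ) : ℝ → ℝ :=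
  fun r => c * r * deriv f r + f r

/-- The operator `L_m = ∏_{s=1}^{m} ((1/(n+2(m-s)))·r·(d/dr) + 1)`. -/
noncomputable def Lop (n m : ℕ) (f : ℝ → ℝ) : ℝ → ℝ :=
  (List.range m).foldr
    (fun s g => Eop (((n : ℝ) + 2 * ((m : ℝ) - ((s : ℝ) + 1)))⁻¹) g) f

/-- The second-order operator `Q_m f = f'' + ((n-1+2m)/r)·f'`. -/
noncomputable def Qop (n m : ℕ) (f : ℝ → ℝ) : ℝ → ℝ :=
  fun r => deriv (deriv f) r + (((n : ℝ) - 1 + 2 * (m : ℝ)) / r) * deriv f r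

open Set Filter Polynomial


noncomputable def Aop (a : ℝ) (g : ℝ → ℝ) : ℝ → ℝ := fun r => r * deriv g r + a * g r

noncomputable def AopL : List ℝ → (ℝ → ℝ) → (ℝ → ℝ)
  | [], g => g
  | a :: as, g => Aop a (AopL as g)


def Dse (a : ℝ) (x : ℕ → ℝ) : ℕ → ℝ := fun k => x (k+1) + (a + k) * x k

abbrev Sm (g : ℝ → ℝ) : Prop := ContDiffOn ℝ ((⊤:ℕ∞) : WithTop ℕ∞) g (Set.Ioi 0)

lemma Sm.deriv' {g : ℝ → ℝ} (hg : Sm g) : Sm (deriv g) :=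
  hg.deriv_of_isOpen isOpen_Ioi (by simp)

lemma Sm.diffAt {g : ℝ → ℝ} (hg : Sm g) {r : ℝ} (hr : r ∈ Set.Ioi 0) :
    DifferentiableAt ℝ g r :=
  (hg.contDiffAt (isOpen_Ioi.mem_nhds hr)).differentiableAt (by simp)

lemma Sm.iter {g : ℝ → ℝ} (hg : Sm g) : ∀ j, Sm (iteratedDeriv j g) := by
  intro j; induction j with
  | zero => simpa [iteratedDeriv_zero] using hg
  | succ j ih => rw [iteratedDeriv_succ]; exact ih.deriv'

lemma Sm.aop {g : ℝ → ℝ} (hg : Sm g) (a : ℝ) : Sm (Aop a g) := by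
  unfold Aop
  exact (contDiffOn_id.mul hg.deriv').add (contDiffOn_const.mul hg)

lemma eqOn_congr_iteratedDeriv {g₁ g₂ : ℝ → ℝ} (h : Set.EqOn g₁ g₂ (Set.Ioi 0)) (k : ℕ)
    {r : ℝ} (hr : r ∈ Set.Ioi 0) : iteratedDeriv k g₁ r = iteratedDeriv k g₂ r := by
  have : g₁ =ᶠ[nhds r] g₂ := Filter.eventuallyEq_of_mem (isOpen_Ioi.mem_nhds hr) h
  exact this.iteratedDeriv_eq k

lemma eqOn_congr_deriv {g₁ g₂ : ℝ → ℝ} (h : Set.EqOn g₁ g₂ (Set.Ioi 0))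
    {r : ℝ} (hr : r ∈ Set.Ioi 0) : deriv g₁ r = deriv g₂ r := by
  exact (Filter.eventuallyEq_of_mem (isOpen_Ioi.mem_nhds hr) h).deriv_eq

/-- jet formula for Aop -/
lemma iteratedDeriv_aop {g : ℝ → ℝ} (hg : Sm g) (a : ℝ) (k : ℕ) :
    ∀ r ∈ Set.Ioi (0:ℝ), iteratedDeriv k (Aop a g) r
      = r * iteratedDeriv (k+1) g r + (a + k) * iteratedDeriv k g r := by
  induction k with
  | zero =>
    intro r hr
    simp [iteratedDeriv_zero, iteratedDeriv_one, Aop]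
  | succ k ih =>
    intro r hr
    have h1 : iteratedDeriv (k+1) (Aop a g) r
        = deriv (fun r => r * iteratedDeriv (k+1) g r + (a + k) * iteratedDeriv k g r) r := by
      rw [iteratedDeriv_succ]
      exact eqOn_congr_deriv (fun y hy => ih y hy) hr
    rw [h1]
    have d1 : HasDerivAt (iteratedDeriv (k+1) g) (iteratedDeriv (k+2) g r) r := by
      have := ((hg.iter (k+1)).diffAt hr).hasDerivAt
      rwa [← iteratedDeriv_succ] at this
    have d0 : HasDerivAt (iteratedDeriv k g) (iteratedDeriv (k+1) g r) r := by
      have := ((hg.iter k).diffAt hr).hasDerivAt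
      rwa [← iteratedDeriv_succ] at this
    have : HasDerivAt (fun r => r * iteratedDeriv (k+1) g r + (a + k) * iteratedDeriv k g r)
        ((1 * iteratedDeriv (k+1) g r + r * iteratedDeriv (k+2) g r)
          + (a + k) * iteratedDeriv (k+1) g r) r :=
      ((hasDerivAt_id r).mul d1).add (d0.const_mul _)
    rw [this.deriv]
    push_cast
    ring


/-- unconditional: iterated derivative of a constant multiple -/
lemma iteratedDeriv_cmul (K : ℝ) (h : ℝ → ℝ) (i : ℕ) :
    iteratedDeriv i (fun x => K * h x) = fun x => K * iteratedDeriv i h x := by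
  induction i with
  | zero => simp [iteratedDeriv_zero]
  | succ i ih =>
    funext r
    rw [iteratedDeriv_succ, ih, iteratedDeriv_succ]
    exact deriv_const_mul_field K

lemma Aop_cmul (a K : ℝ) (h : ℝ → ℝ) :
    Aop a (fun x => K * h x) = fun x => K * Aop a h x := by
  funext r
  simp only [Aop, deriv_const_mul_field]
  ring

lemma Eop_eq_aop (c : ℝ) (hc : c ≠ 0) (h : ℝ → ℝ) :
    Eop c h = fun x => c * Aop c⁻¹ h x := by
  funext r
  simp only [Eop, Aop]
  field_simp

/-- Lop as a scalar multiple of an Aop chain -/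
lemma foldr_eop (cc : ℝ → ℝ) (l : List ℝ) (hc : ∀ s ∈ l, cc s ≠ 0) (f : ℝ → ℝ) :
    l.foldr (fun s g => Eop (cc s) g) f
      = fun x => (l.map cc).prod * AopL (l.map (fun s => (cc s)⁻¹)) f x := by
  induction l with
  | nil => simp [AopL]
  | cons s l ih =>
    have hs : cc s ≠ 0 := hc s List.mem_cons_self
    have ih' := ih (fun u hu => hc u (List.mem_cons_of_mem s hu))
    simp only [List.foldr_cons, ih', List.map_cons, List.prod_cons, AopL]
    rw [show (fun x => (l.map cc).prod * AopL (l.map fun s => (cc s)⁻¹) f x)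
        = (fun x => (l.map cc).prod * (AopL (l.map fun s => (cc s)⁻¹) f) x) from rfl]
    rw [Eop_eq_aop (cc s) hs, Aop_cmul]
    funext x; ring


lemma Sm.aopL {g : ℝ → ℝ} (hg : Sm g) (as : List ℝ) : Sm (AopL as g) := by
  induction as with
  | nil => exact hg
  | cons a as ih => exact ih.aop a

lemma Sm.zpow (z : ℤ) : Sm (fun x : ℝ => x ^ z) := by
  rcases z with p | p
  · simpa using (contDiffOn_id (s := Set.Ioi (0:ℝ))).pow p
  · have h1 : Sm (fun x : ℝ => x ^ (p+1)) := (contDiffOn_id).pow (p+1)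
    have := h1.inv (fun x hx => pow_ne_zero _ (ne_of_gt hx))
    refine this.congr (fun x hx => ?_)
    simp [zpow_negSucc]

lemma Sm.zpow_mul {u : ℝ → ℝ} (hu : Sm u) (z : ℤ) : Sm (fun x => x ^ z * u x) :=
  (Sm.zpow z).mul hu

lemma Aop_congr {a : ℝ} {v₁ v₂ : ℝ → ℝ} (h : Set.EqOn v₁ v₂ (Set.Ioi 0))
    {r : ℝ} (hr : r ∈ Set.Ioi 0) : Aop a v₁ r = Aop a v₂ r := by
  simp only [Aop, eqOn_congr_deriv h hr, h hr]

lemma Qop_congr {n m : ℕ} {v₁ v₂ : ℝ → ℝ} (h : Set.EqOn v₁ v₂ (Set.Ioi 0))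
    {r : ℝ} (hr : r ∈ Set.Ioi 0) : Qop n m v₁ r = Qop n m v₂ r := by
  have hd : Set.EqOn (deriv v₁) (deriv v₂) (Set.Ioi 0) := fun y hy => eqOn_congr_deriv h hy
  simp only [Qop, eqOn_congr_deriv hd hr, hd hr]

lemma Aop_zpow (a : ℝ) (z : ℤ) {u : ℝ → ℝ} (hu : Sm u) {r : ℝ} (hr : r ∈ Set.Ioi 0) :
    Aop a (fun x => x ^ z * u x) r = r ^ z * Aop (a + z) u r := by
  have hr0 : r ≠ 0 := ne_of_gt hr
  have hz : HasDerivAt (fun x : ℝ => x ^ z) ((z:ℝ) * r ^ (z-1)) r :=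
    hasDerivAt_zpow z r (Or.inl hr0)
  have hder : HasDerivAt (fun x => x ^ z * u x)
      ((z:ℝ) * r ^ (z-1) * u r + r ^ z * deriv u r) r :=
    hz.mul (hu.diffAt hr).hasDerivAt
  simp only [Aop, hder.deriv]
  rw [zpow_sub_one₀ hr0]
  field_simp
  ring

lemma Qop_eq (n m : ℕ) {h : ℝ → ℝ} (hh : Sm h) {r : ℝ} (hr : r ∈ Set.Ioi 0) :
    Qop n m h r = r⁻¹ * (r⁻¹ * Aop 0 (Aop ((n:ℝ) + 2*m - 2) h) r) := by
  have hr0 : r ≠ 0 := ne_of_gt hr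
  have h1 : HasDerivAt (fun x => x * deriv h x) (1 * deriv h r + r * deriv (deriv h) r) r :=
    (hasDerivAt_id r).mul (hh.deriv'.diffAt hr).hasDerivAt
  have h2 : HasDerivAt (fun x => ((n:ℝ) + 2*m - 2) * h x) (((n:ℝ) + 2*m - 2) * deriv h r) r :=
    ((hh.diffAt hr).hasDerivAt).const_mul _
  have hd : HasDerivAt (Aop ((n:ℝ) + 2*m - 2) h)
      ((1 * deriv h r + r * deriv (deriv h) r) + ((n:ℝ) + 2*m - 2) * deriv h r) r := h1.add h2
  simp only [Qop, Aop, hd.deriv]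
  field_simp
  ring

noncomputable def QLl (b : ℝ) : ℕ → List ℝ
  | 0 => []
  | l+1 => (-(2*(l:ℝ))) :: (b - 2*(l:ℝ)) :: QLl b l

lemma qiter (n m : ℕ) {f : ℝ → ℝ} (hf : Sm f) (l : ℕ) :
    ∀ r ∈ Set.Ioi (0:ℝ), (Qop n m)^[l] f r
      = r ^ (-(2*(l:ℤ))) * AopL (QLl ((n:ℝ) + 2*m - 2) l) f r := by
  set b : ℝ := (n:ℝ) + 2*m - 2 with hb
  induction l with
  | zero => intro r hr; simp [QLl, AopL]
  | succ l ih =>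
    intro r hr
    have hr0 : r ≠ 0 := ne_of_gt hr
    set u : ℝ → ℝ := AopL (QLl b l) f with hu
    have hus : Sm u := hf.aopL _
    set z : ℤ := -(2*(l:ℤ)) with hz
    have e1 : Set.EqOn ((Qop n m)^[l] f) (fun x => x ^ z * u x) (Set.Ioi 0) :=
      fun y hy => ih y hy
    rw [Function.iterate_succ_apply', Qop_congr e1 hr,
      Qop_eq n m (hus.zpow_mul z) hr]
    have e2 : Set.EqOn (Aop b (fun x => x ^ z * u x))
        (fun x => x ^ z * Aop (b + z) u x) (Set.Ioi 0) :=
      fun y hy => Aop_zpow b z hus hy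
    rw [Aop_congr e2 hr, Aop_zpow 0 z (hus.aop _) hr]
    have hlist : QLl b (l+1) = (0 + (z:ℝ)) :: (b + (z:ℝ)) :: QLl b l := by
      simp only [QLl]
      push_cast [hz]
      ring_nf
    rw [hlist]
    show r⁻¹ * (r⁻¹ * (r ^ z * Aop (0 + (z:ℝ)) (Aop (b + (z:ℝ)) u) r))
      = r ^ (-(2*((l:ℤ)+1))) * Aop (0 + (z:ℝ)) (Aop (b + (z:ℝ)) u) r
    have hzp : r ^ (-(2*((l:ℤ)+1))) = r⁻¹ * (r⁻¹ * r ^ z) := by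
      rw [show (-(2*((l:ℤ)+1))) = (-1) + ((-1) + z) by rw [hz]; ring,
        zpow_add₀ hr0, zpow_add₀ hr0, zpow_neg_one]
    rw [hzp]; ring


def DseL : List ℝ → (ℕ → ℝ) → (ℕ → ℝ)
  | [], x => x
  | a :: as, x => Dse a (DseL as x)

noncomputable def Bend : Module.End ℝ (ℕ → ℝ) where
  toFun x := fun k => x (k+1) + k * x k
  map_add' x y := by funext k; simp [Pi.add_apply]; ring
  map_smul' c x := by funext k; simp [Pi.smul_apply, smul_eq_mul]; ring

lemma Dse_eq_aeval (a : ℝ) (x : ℕ → ℝ) :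
    Dse a x = Polynomial.aeval Bend (X + C a) x := by
  funext k
  simp only [map_add, aeval_X, aeval_C, LinearMap.add_apply,
    Module.algebraMap_end_apply, Dse]
  show x (k+1) + (a + k) * x k = (x (k+1) + k * x k) + a * x k
  ring

lemma DseL_eq_aeval (as : List ℝ) (x : ℕ → ℝ) :
    DseL as x = Polynomial.aeval Bend ((as.map fun a => X + C a).prod) x := by
  induction as with
  | nil => simp [DseL]
  | cons a as ih =>
    simp only [DseL, List.map_cons, List.prod_cons, map_mul, Module.End.mul_apply, ih,
      Dse_eq_aeval]

noncomputable def psi (a : ℝ) : ℕ → ℝ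
  | 0 => 1
  | (k+1) => -(a + k) * psi a k

lemma psi_eigen (a : ℝ) : Bend.HasEigenvector (-a) (psi a) := by
  constructor
  · rw [Module.End.mem_eigenspace_iff]
    funext k
    show psi a (k+1) + k * psi a k = -a * psi a k
    rw [psi]; ring
  · intro h
    have := congrFun h 0
    simp [psi] at this

lemma aeval_psi (a : ℝ) (p : ℝ[X]) :
    Polynomial.aeval Bend p (psi a) = p.eval (-a) • psi a :=
  Module.End.aeval_apply_of_hasEigenvector (psi_eigen a)

lemma sol_of_Dse_zero (a : ℝ) (z : ℕ → ℝ) (hz : ∀ k, Dse a z k = 0) :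
    z = z 0 • psi a := by
  funext k
  induction k with
  | zero => simp [psi]
  | succ k ih =>
    have h := hz k
    have : z (k+1) = -(a + k) * z k := by rw [Dse] at h; linarith
    rw [this, ih]
    show -(a+k) * (z 0 * psi a k) = z 0 * psi a (k+1)
    rw [psi]; ring

section main
variable (n m : ℕ)

noncomputable def alf : ℕ → ℝ := fun t => (n:ℝ) + 2*t
noncomputable def vv : ℕ → ℝ := fun t => -((n:ℝ) + 2*t)

lemma vv_inj : Set.InjOn (vv n) ↑(Finset.range m) := by
  intro t _ t' _ h
  simp only [vv, neg_inj, add_right_inj] at h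
  have : (t:ℝ) = t' := by linarith
  exact_mod_cast this

lemma sum_basis_eq_one (hm : 1 ≤ m) :
    ∑ t ∈ Finset.range m, Lagrange.basis (Finset.range m) (vv n) t = 1 := by
  have hdeg : (1 : ℝ[X]).degree < (Finset.range m).card := by
    rw [Polynomial.degree_one, Finset.card_range]
    exact_mod_cast hm
  have h := Lagrange.eq_interpolate (vv_inj n m) hdeg
  rw [Lagrange.interpolate_apply] at h
  simpa using h.symm

noncomputable def pN : ℝ[X] := ∏ t ∈ Finset.range m, (X + C (alf n t))

lemma mul_basis (t : ℕ) (ht : t ∈ Finset.range m) :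
    (X + C (alf n t)) * Lagrange.basis (Finset.range m) (vv n) t
      = (∏ u ∈ (Finset.range m).erase t, C ((vv n t - vv n u)⁻¹)) * pN n m := by
  unfold Lagrange.basis Lagrange.basisDivisor
  have h1 : ∀ u : ℕ, X - C (vv n u) = X + C (alf n u) := by
    intro u
    simp only [vv, alf, map_neg, sub_neg_eq_add]
  simp_rw [h1, Finset.prod_mul_distrib]
  rw [mul_left_comm, Finset.mul_prod_erase _ (fun u => X + C (alf n u)) ht, pN]

lemma Dse_basis_aeval (x : ℕ → ℝ) (hx : Polynomial.aeval Bend (pN n m) x = 0)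
    (t : ℕ) (ht : t ∈ Finset.range m) (k : ℕ) :
    Dse (alf n t) (Polynomial.aeval Bend (Lagrange.basis (Finset.range m) (vv n) t) x) k
      = 0 := by
  have h : Dse (alf n t) (Polynomial.aeval Bend (Lagrange.basis (Finset.range m) (vv n) t) x)
      = Polynomial.aeval Bend ((X + C (alf n t)) * Lagrange.basis (Finset.range m) (vv n) t) x := by
    rw [Dse_eq_aeval, map_mul, Module.End.mul_apply]
  rw [h, mul_basis n m t ht, map_mul, Module.End.mul_apply, hx, map_zero]
  rfl

noncomputable def pQ (l : ℕ) : ℝ[X] :=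
  ∏ j ∈ Finset.range l, ((X - C (2*(j:ℝ))) * (X + C ((n:ℝ) + 2*m - 2 - 2*j)))

lemma pQ_eval (l t : ℕ) :
    (pQ n m l).eval (vv n t)
      = ∏ j ∈ Finset.range l, ((vv n t - 2*j) * (vv n t + ((n:ℝ) + 2*m - 2 - 2*j))) := by
  simp [pQ, Polynomial.eval_prod]

lemma pQ_eval_ne_zero (hn : 1 ≤ n) (l t : ℕ) (hlt : l + t < m) :
    (pQ n m l).eval (vv n t) ≠ 0 := by
  rw [pQ_eval]
  rw [Finset.prod_ne_zero_iff]
  intro j hj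
  rw [Finset.mem_range] at hj
  apply mul_ne_zero
  · have h1 : (0:ℝ) < (n:ℝ) + 2*t + 2*j := by positivity
    simp only [vv]; intro h; linarith
  · have hj2 : (j:ℝ) + (t:ℝ) + 2 ≤ (m:ℝ) := by
      have : j + t + 2 ≤ m := by omega
      exact_mod_cast this
    simp only [vv]; intro h; linarith

lemma pQ_eval_zero (l t : ℕ) (ht : t < m) (hm : 1 ≤ m) (hlt : m ≤ l + t) :
    (pQ n m l).eval (vv n t) = 0 := by
  rw [pQ_eval]
  apply Finset.prod_eq_zero (i := m - 1 - t) (Finset.mem_range.2 (by omega))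
  have hc : ((m - 1 - t : ℕ) : ℝ) = (m:ℝ) - 1 - t := by
    have h1 : m - 1 - t = m - (1 + t) := by omega
    rw [h1, Nat.cast_sub (by omega : 1 + t ≤ m)]
    push_cast; ring
  rw [hc]
  have : vv n t + ((n:ℝ) + 2*m - 2 - 2*((m:ℝ) - 1 - t)) = 0 := by
    simp only [vv]; ring
  rw [this, mul_zero]

lemma QLl_prod (l : ℕ) :
    (((QLl ((n:ℝ) + 2*m - 2) l)).map fun a => X + C a).prod = pQ n m l := by
  induction l with
  | zero => simp [QLl, pQ]
  | succ l ih =>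
    simp only [QLl, List.map_cons, List.prod_cons, ih, pQ, Finset.prod_range_succ,
      map_neg, ← sub_eq_add_neg]
    ring

lemma range_foldprod (g : ℕ → ℝ[X]) (k : ℕ) :
    ((List.range k).map g).prod = ∏ s ∈ Finset.range k, g s := by
  induction k with
  | zero => simp
  | succ k ih => rw [List.range_succ, List.map_append, List.prod_append,
      Finset.prod_range_succ, ih]; simp

lemma asL_prod (hm : 1 ≤ m) :
    ((((List.range m).map fun s : ℕ => (n:ℝ) + 2*((m:ℝ) - ((s:ℝ)+1))).map
      fun a => X + C a).prod) = pN n m := by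
  rw [List.map_map, range_foldprod]
  rw [show (∏ s ∈ Finset.range m,
      ((fun a => X + C a) ∘ fun s : ℕ => (n:ℝ) + 2*((m:ℝ) - ((s:ℝ)+1))) s)
      = ∏ s ∈ Finset.range m, (X + C (alf n (m - 1 - s))) from ?_]
  · exact Finset.prod_range_reflect (fun j => X + C (alf n j)) m
  · apply Finset.prod_congr rfl
    intro s hs
    rw [Finset.mem_range] at hs
    have hc : ((m - 1 - s : ℕ) : ℝ) = (m:ℝ) - 1 - s := by
      have h1 : m - 1 - s = m - (1 + s) := by omega
      rw [h1, Nat.cast_sub (by omega : 1 + s ≤ m)]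
      push_cast; ring
    simp only [Function.comp, alf, hc]
    ring_nf

theorem seq_main (hn : 1 ≤ n) (hm : 1 ≤ m) (x : ℕ → ℝ)
    (H1 : ∀ k, DseL ((List.range m).map fun s : ℕ => (n:ℝ) + 2*((m:ℝ) - ((s:ℝ)+1))) x k = 0)
    (H2 : ∀ l, l < m → DseL (QLl ((n:ℝ) + 2*m - 2) l) x 0 = 0) :
    ∀ j, x j = 0 := by
  have hpN : Polynomial.aeval Bend (pN n m) x = 0 := by
    rw [← asL_prod n m hm, ← DseL_eq_aeval]
    funext k; exact H1 k
  set y : ℕ → (ℕ → ℝ) :=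
    fun t => Polynomial.aeval Bend (Lagrange.basis (Finset.range m) (vv n) t) x with hy0
  set c : ℕ → ℝ := fun t => y t 0 with hc0
  have hy : ∀ t ∈ Finset.range m, y t = c t • psi (alf n t) := by
    intro t ht
    exact sol_of_Dse_zero _ _ (Dse_basis_aeval n m x hpN t ht)
  have hx : x = ∑ t ∈ Finset.range m, y t := by
    have h1 : Polynomial.aeval Bend (1 : ℝ[X]) x = x := by simp
    rw [← sum_basis_eq_one n m hm, map_sum] at h1
    rw [← h1, LinearMap.sum_apply]
  have hsum : ∀ l, l < m →
      ∑ t ∈ Finset.range m, c t * (pQ n m l).eval (vv n t) = 0 := by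
    intro l hl
    have h2 := H2 l hl
    rw [DseL_eq_aeval, QLl_prod] at h2
    rw [hx] at h2
    rw [map_sum] at h2
    have h3 : ∀ t ∈ Finset.range m,
        Polynomial.aeval Bend (pQ n m l) (y t)
          = (c t * (pQ n m l).eval (vv n t)) • psi (alf n t) := by
      intro t ht
      rw [hy t ht, map_smul, aeval_psi]
      rw [show -(alf n t) = vv n t by simp [alf, vv]]
      rw [smul_smul]
    rw [Finset.sum_congr rfl h3] at h2
    have h4 := h2
    simp only [Finset.sum_apply, Pi.smul_apply, smul_eq_mul, Pi.zero_apply] at h4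
    calc ∑ t ∈ Finset.range m, c t * (pQ n m l).eval (vv n t)
        = ∑ t ∈ Finset.range m, c t * (pQ n m l).eval (vv n t) * psi (alf n t) 0 := by
          apply Finset.sum_congr rfl; intro t _; rw [show psi (alf n t) 0 = 1 from rfl]; ring
      _ = 0 := h4
  have hc : ∀ t, t < m → c t = 0 := by
    intro t
    induction t using Nat.strong_induction_on with
    | _ t ih =>
      intro ht
      have hl : m - 1 - t < m := by omega
      have h5 := hsum (m - 1 - t) hl
      have h6 : ∑ t' ∈ Finset.range m, c t' * (pQ n m (m - 1 - t)).eval (vv n t')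
          = c t * (pQ n m (m - 1 - t)).eval (vv n t) := by
        apply Finset.sum_eq_single_of_mem t (Finset.mem_range.2 ht)
        intro t' ht' hne
        rcases lt_or_gt_of_ne hne with h | h
        · rw [ih t' h (lt_trans h ht)]; ring
        · rw [pQ_eval_zero n m (m - 1 - t) t' (Finset.mem_range.1 ht') hm (by omega)]; ring
      rw [h6] at h5
      have h7 := pQ_eval_ne_zero n m hn (m - 1 - t) t (by omega)
      exact (mul_eq_zero.1 h5).resolve_right h7
  have hx0 : x = 0 := by
    rw [hx]
    apply Finset.sum_eq_zero
    intro t ht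
    rw [hy t ht, hc t (Finset.mem_range.1 ht), zero_smul]
  intro j
  rw [hx0]; rfl


lemma jet_AopL {g : ℝ → ℝ} (hg : Sm g) (as : List ℝ) :
    ∀ k, iteratedDeriv k (AopL as g) 1 = DseL as (fun j => iteratedDeriv j g 1) k := by
  induction as with
  | nil => intro k; rfl
  | cons a as ih =>
    intro k
    have h1 : (1:ℝ) ∈ Set.Ioi (0:ℝ) := by norm_num
    have h2 := iteratedDeriv_aop (hg.aopL as) a k 1 h1
    show iteratedDeriv k (Aop a (AopL as g)) 1 = Dse a (DseL as fun j => iteratedDeriv j g 1) k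
    rw [h2]
    have h3 : (fun j => iteratedDeriv j (AopL as g) 1)
        = DseL as (fun j => iteratedDeriv j g 1) := funext ih
    show 1 * iteratedDeriv (k+1) (AopL as g) 1 + (a + k) * iteratedDeriv k (AopL as g) 1 = _
    rw [show iteratedDeriv (k+1) (AopL as g) 1
        = (fun j => iteratedDeriv j (AopL as g) 1) (k+1) from rfl,
      show iteratedDeriv k (AopL as g) 1
        = (fun j => iteratedDeriv j (AopL as g) 1) k from rfl, h3]
    show 1 * DseL as _ (k+1) + (a + k) * DseL as _ k = Dse a (DseL as _) k
    rw [Dse]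
    ring

/-- If a smooth `f` on `(0,∞)` satisfies
`(d^i/dr^i (L_m f))(1) = 0` for every `i ≥ 0` and `(Q_m^l f)(1) = 0` for
`l = 0, …, m-1`, then all derivatives of `f` vanish at `r = 1`. -/
theorem stmt_16 (n m : ℕ) (hn : 1 ≤ n) (hm : 1 ≤ m) (f : ℝ → ℝ)
    (hf : ContDiffOn ℝ (⊤ : ℕ∞) f (Set.Ioi 0))
    (hL : ∀ i : ℕ, iteratedDeriv i (Lop n m f) 1 = 0)
    (hQ : ∀ l : ℕ, l < m → (Qop n m)^[l] f 1 = 0) :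
    ∀ j : ℕ, iteratedDeriv j f 1 = 0 := by
  have hfs : Sm f := hf.of_le (by simp)
  have h1 : (1:ℝ) ∈ Set.Ioi (0:ℝ) := by norm_num
  set cc : ℝ → ℝ := fun s => (((n : ℝ) + 2 * ((m : ℝ) - (s + 1)))⁻¹) with hcc
  set lR : List ℝ := (List.range m).map (fun a : ℕ => (a:ℝ)) with hlR
  have hmem : ∀ s ∈ lR, ∃ k : ℕ, k < m ∧ s = (k:ℝ) := by
    intro s hs
    rw [hlR, List.mem_map] at hs
    obtain ⟨k, hk, rfl⟩ := hs
    exact ⟨k, List.mem_range.1 hk, rfl⟩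
  have hcpos : ∀ s ∈ lR, (0:ℝ) < (n : ℝ) + 2 * ((m : ℝ) - (s + 1)) := by
    intro s hs
    obtain ⟨k, hk, rfl⟩ := hmem s hs
    have h2 : (k:ℝ) + 1 ≤ (m:ℝ) := by exact_mod_cast hk
    have h3 : (1:ℝ) ≤ (n:ℝ) := by exact_mod_cast hn
    linarith
  have hcne : ∀ s ∈ lR, cc s ≠ 0 := fun s hs =>
    inv_ne_zero (ne_of_gt (hcpos s hs))
  have hLop : Lop n m f
      = fun x => ((lR.map cc).prod) * AopL (lR.map (fun s => (cc s)⁻¹)) f x := by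
    have hbind : (do let a ← List.range m; pure ((a:ℕ):ℝ)) = lR := by
      rw [hlR]
      show ((List.range m).flatMap fun a => [((a:ℕ):ℝ)])
        = List.map (fun a : ℕ => (a:ℝ)) (List.range m)
      induction (List.range m) with
      | nil => rfl
      | cons a l ih => simp [List.flatMap_cons, ih]
    simp only [Lop]
    rw [show (List.foldr (fun (s:ℝ) g => Eop ((↑n + 2 * (↑m - (s + 1)))⁻¹) g) f
        (do let a ← List.range m; pure ((a:ℕ):ℝ)))
        = List.foldr (fun (s:ℝ) g => Eop (cc s) g) f lR by rw [hbind]]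
    exact foldr_eop cc lR hcne f
  set asL : List ℝ := (List.range m).map (fun s : ℕ => (n:ℝ) + 2*((m:ℝ) - ((s:ℝ)+1)))
    with hasL
  have hmapeq : lR.map (fun s => (cc s)⁻¹) = asL := by
    rw [hlR, hasL, List.map_map]
    apply List.map_congr_left
    intro k _
    simp only [Function.comp, hcc, inv_inv]
  have hKne : ((lR.map cc).prod) ≠ 0 := by
    apply List.prod_ne_zero
    intro h0
    rw [List.mem_map] at h0
    obtain ⟨s, hs, hs0⟩ := h0
    exact hcne s hs hs0
  set x : ℕ → ℝ := fun j => iteratedDeriv j f 1 with hx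
  have H1 : ∀ k, DseL asL x k = 0 := by
    intro k
    have h2 := hL k
    rw [hLop, iteratedDeriv_cmul] at h2
    have h3 := (mul_eq_zero.1 h2).resolve_left hKne
    rw [← hmapeq, ← jet_AopL hfs _ k]
    exact h3
  have H2 : ∀ l, l < m → DseL (QLl ((n:ℝ) + 2*m - 2) l) x 0 = 0 := by
    intro l hl
    have h2 := hQ l hl
    rw [qiter n m hfs l 1 h1, one_zpow, one_mul] at h2
    have h3 := jet_AopL hfs (QLl ((n:ℝ) + 2*m - 2) l) 0
    rw [iteratedDeriv_zero] at h3
    rw [← h3]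
    exact h2
  intro j
  exact seq_main n m hn hm x H1 H2 j
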